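/- arXiv:2203.16938 — 3 statements merged into one kernel-verified Lean document; each statement's English description precedes it below -/
import Mathlib

section
/- For every z ∈ ℂ with |z| = 1, every θ ∈ {+1,−1}, and every ψ ∈ ℂ⁴, one has the identity (P^z_θψ)†·γ⁰·(P^z_θψ) = (i/2)·Im(θ·z·ψ†γ⁰γ²ψ*), where Im denotes the imaginary part, ψ* is the entrywise complex conjugate, and ψ† = (ψ*)ᵀ is the conjugate transpose. -/
/-!
Write `c = θz` and `φ = γ²ψ*`, so that `P^z_θ ψ = ½(ψ + cφ)`; as `γ²` is purely imaginary, `φ* = -γ²ψ`.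
The `γ⁰`-form of `ψ + cφ` expands into `ψ†γ⁰ψ + c·ψ†γ⁰φ + c̄·φ†γ⁰ψ + |c|²·φ†γ⁰φ`. The symmetric
matrices `γ⁰` and `γ²` anticommute, so `γ⁰γ²` is antisymmetric, and both cross terms are, up to sign,
values of its quadratic form, hence zero; `(γ²)² = -1` gives `φ†γ⁰φ = -ψ†γ⁰ψ`. As `|c| = 1` the left
side vanishes, and so does the right side, `ψ†γ⁰γ²ψ*` being the first cross term again.
-/

open Matrix Complex

noncomputable section

/-- The Dirac gamma matrix `γ⁰ = [[I₂,0],[0,−I₂]]`. -/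
def gamma0 : Matrix (Fin 4) (Fin 4) ℂ :=
  !![1, 0, 0, 0; 0, 1, 0, 0; 0, 0, -1, 0; 0, 0, 0, -1]

/-- `γ² = [[0,σ²],[−σ²,0]]` with `σ² = [[0,−i],[i,0]]`. -/
def gamma2 : Matrix (Fin 4) (Fin 4) ℂ :=
  !![0, 0, 0, -I; 0, 0, I, 0; 0, I, 0, 0; -I, 0, 0, 0]

/-- Entrywise complex conjugation `ψ*` of a vector `ψ ∈ ℂ⁴`. -/
def vstar (ψ : Fin 4 → ℂ) : Fin 4 → ℂ := fun i => starRingEnd ℂ (ψ i)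

/-- The charge conjugation operator `C^z_θ ψ = θ·z·γ²ψ*`. -/
def CC (z : ℂ) (θ : ℝ) (ψ : Fin 4 → ℂ) : Fin 4 → ℂ :=
  ((θ : ℂ) * z) • gamma2.mulVec (vstar ψ)

/-- The projection `P^z_θ ψ = ½(ψ + C^z_θ ψ)`. -/
def PP (z : ℂ) (θ : ℝ) (ψ : Fin 4 → ℂ) : Fin 4 → ℂ :=
  (1 / 2 : ℂ) • (ψ + CC z θ ψ)

theorem dotProduct_mulVec_self_eq_zero_of_transpose_eq_neg {n R : Type*} [Fintype n] [CommRing R]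
    [NoZeroDivisors R] [CharZero R] {M : Matrix n n R} (hM : Mᵀ = -M) (x : n → R) :
    x ⬝ᵥ M *ᵥ x = 0 := by
  have h := dotProduct_transpose_mulVec M x x
  rw [hM, neg_mulVec, dotProduct_neg] at h
  exact self_eq_neg.mp h.symm

theorem vstar_vstar (v : Fin 4 → ℂ) : vstar (vstar v) = v := by
  ext i; simp [vstar]

theorem vstar_add (u v : Fin 4 → ℂ) : vstar (u + v) = vstar u + vstar v := by
  ext i; simp [vstar]

theorem vstar_smul (c : ℂ) (v : Fin 4 → ℂ) : vstar (c • v) = starRingEnd ℂ c • vstar v := by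
  ext i; simp [vstar]

theorem vstar_add_smul_dotProduct_mulVec (M : Matrix (Fin 4) (Fin 4) ℂ) (u v : Fin 4 → ℂ) (c : ℂ) :
    vstar (u + c • v) ⬝ᵥ M *ᵥ (u + c • v) =
      vstar u ⬝ᵥ M *ᵥ u + c * (vstar u ⬝ᵥ M *ᵥ v) + starRingEnd ℂ c * (vstar v ⬝ᵥ M *ᵥ u) +
        starRingEnd ℂ c * c * (vstar v ⬝ᵥ M *ᵥ v) := by
  simp only [vstar_add, vstar_smul, mulVec_add, mulVec_smul, add_dotProduct, dotProduct_add,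
    smul_dotProduct, dotProduct_smul, smul_eq_mul]
  ring

theorem gamma0_transpose : gamma0ᵀ = gamma0 := by
  ext i j; fin_cases i <;> fin_cases j <;> simp [gamma0]

theorem gamma2_transpose : gamma2ᵀ = gamma2 := by
  ext i j; fin_cases i <;> fin_cases j <;> simp [gamma2]

theorem gamma2_mul_gamma2 : gamma2 * gamma2 = -1 := by
  ext i j; fin_cases i <;> fin_cases j <;> simp [gamma2]

theorem gamma0_mul_gamma2 : gamma0 * gamma2 = -(gamma2 * gamma0) := by
  ext i j; fin_cases i <;> fin_cases j <;> simp [gamma0, gamma2]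

theorem vstar_gamma2_mulVec (v : Fin 4 → ℂ) : vstar (gamma2 *ᵥ v) = -(gamma2 *ᵥ vstar v) := by
  ext i; fin_cases i <;> simp [vstar, gamma2, mulVec, dotProduct, Fin.sum_univ_four]

theorem transpose_gamma0_mul_gamma2 : (gamma0 * gamma2)ᵀ = -(gamma0 * gamma2) := by
  rw [transpose_mul, gamma0_transpose, gamma2_transpose, gamma0_mul_gamma2, neg_neg]

section ChargeConjugate

variable (ψ : Fin 4 → ℂ)

theorem vstar_dotProduct_gamma0_mulVec_gamma2 :
    vstar ψ ⬝ᵥ gamma0 *ᵥ (gamma2 *ᵥ vstar ψ) = 0 := by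
  rw [mulVec_mulVec]
  exact dotProduct_mulVec_self_eq_zero_of_transpose_eq_neg transpose_gamma0_mul_gamma2 _

theorem vstar_gamma2_dotProduct_gamma0_mulVec :
    vstar (gamma2 *ᵥ vstar ψ) ⬝ᵥ gamma0 *ᵥ ψ = 0 := by
  rw [vstar_gamma2_mulVec, vstar_vstar, neg_dotProduct, ← dotProduct_transpose_mulVec,
    gamma0_transpose, mulVec_mulVec, neg_eq_zero]
  exact dotProduct_mulVec_self_eq_zero_of_transpose_eq_neg transpose_gamma0_mul_gamma2 _

theorem vstar_gamma2_dotProduct_gamma0_mulVec_gamma2 :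
    vstar (gamma2 *ᵥ vstar ψ) ⬝ᵥ gamma0 *ᵥ (gamma2 *ᵥ vstar ψ) = -(vstar ψ ⬝ᵥ gamma0 *ᵥ ψ) := by
  rw [vstar_gamma2_mulVec, vstar_vstar, neg_dotProduct, mulVec_mulVec,
    ← dotProduct_transpose_mulVec, mulVec_mulVec, transpose_gamma0_mul_gamma2, neg_mul, mul_assoc,
    gamma2_mul_gamma2, mul_neg, mul_one, neg_neg]

end ChargeConjugate

/-- For `|z| = 1`, `θ ∈ {+1,−1}`, `ψ ∈ ℂ⁴`:
`(P^z_θψ)†·γ⁰·(P^z_θψ) = (i/2)·Im(θ·z·ψ†γ⁰γ²ψ*)`. -/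
theorem proj_bilinear_form (z : ℂ) (hz : ‖z‖ = 1)
    (θ : ℝ) (hθ : θ = 1 ∨ θ = -1) (ψ : Fin 4 → ℂ) :
    vstar (PP z θ ψ) ⬝ᵥ gamma0.mulVec (PP z θ ψ) =
      (Complex.I / 2) *
        ((((θ : ℂ) * z * (vstar ψ ⬝ᵥ (gamma0 * gamma2).mulVec (vstar ψ))).im : ℝ) : ℂ) := by
  have hc : starRingEnd ℂ (θ * z) * (θ * z) = 1 := by
    rw [mul_comm, mul_conj, normSq_eq_norm_sq, norm_mul, hz]
    rcases hθ with rfl | rfl <;> norm_num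
  rw [← mulVec_mulVec, vstar_dotProduct_gamma0_mulVec_gamma2, PP, CC, vstar_smul, mulVec_smul,
    smul_dotProduct, dotProduct_smul, vstar_add_smul_dotProduct_mulVec,
    vstar_dotProduct_gamma0_mulVec_gamma2, vstar_gamma2_dotProduct_gamma0_mulVec,
    vstar_gamma2_dotProduct_gamma0_mulVec_gamma2, hc]
  simp
end
end

section
/- There exist constants C₂ ≥ C₁ > 0 such that for every b > 0 and every x ∈ ℝ² with b|x| ≥ 1, the two-dimensional potential satisfies C₁ · e^{−b|x|} · (b|x|)^{−1/2} ≤ V_b(x) ≤ C₂ · e^{−b|x|} · (b|x|)^{−1/2}. -/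
open MeasureTheory Real

noncomputable section

/-- The two-dimensional potential `V_b(x) = ∫₀^∞ e^{−b²r − |x|²/(4r)} dr/r`. -/
def V2d (b : ℝ) (x : EuclideanSpace ℝ (Fin 2)) : ℝ :=
  ∫ r in Set.Ioi (0 : ℝ), Real.exp (-(b ^ 2 * r) - ‖x‖ ^ 2 / (4 * r)) / r

/-!
With `s = b‖x‖`, the substitution `r = (‖x‖ / (2b)) eᵘ` turns `V_b(x)` into
`∫ exp (-s cosh u) du = e^{-s} ∫ exp (-s (cosh u - 1)) du` (that is, `2 K₀(s)`).
Since `cosh u - 1 ≥ u² / 2`, the last integral is at most the Gaussian integral `√(2π / s)`;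
since `cosh u - 1 ≤ u²` for `u² ≤ 1`, the integrand is at least `e^{-1}` on `|u| ≤ s^{-1/2}`
once `s ≥ 1`, so the integral is at least `2 e^{-1} s^{-1/2}`.
-/

open Set

theorem integral_Ioi_div_self_eq_integral_comp_exp (g : ℝ → ℝ) :
    ∫ r in Ioi 0, g r / r = ∫ u, g (exp u) := by
  have h := integral_image_eq_integral_abs_deriv_smul MeasurableSet.univ
    (fun u _ => (hasDerivAt_exp u).hasDerivWithinAt) exp_injective.injOn (fun r => g r / r)
  rw [image_univ, range_exp, Measure.restrict_univ] at h
  rw [h]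
  congr 1 with u
  rw [abs_of_pos (exp_pos u), smul_eq_mul, mul_div_cancel₀ _ (exp_pos u).ne']

theorem integral_Ioi_exp_neg_div_self_eq_integral_exp_neg_mul_cosh {b n : ℝ} (hb : 0 < b)
    (hn : 0 < n) :
    ∫ r in Ioi 0, exp (-(b ^ 2 * r) - n ^ 2 / (4 * r)) / r = ∫ u, exp (-(b * n * cosh u)) := by
  rw [integral_Ioi_div_self_eq_integral_comp_exp (fun r => exp (-(b ^ 2 * r) - n ^ 2 / (4 * r))),
    ← integral_add_right_eq_self _ (log (n / (2 * b)))]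
  congr 1 with u
  rw [exp_add, exp_log (by positivity), cosh_eq]
  congr 1
  rw [exp_neg]
  field_simp
  ring

theorem one_add_sq_div_two_le_cosh (u : ℝ) : 1 + u ^ 2 / 2 ≤ cosh u := by
  have h : cosh u = 1 + 2 * sinh (u / 2) ^ 2 := by
    rw [← mul_div_cancel₀ u (two_ne_zero' ℝ), cosh_two_mul, cosh_sq']; ring_nf
  have : (u / 2) ^ 2 ≤ sinh (u / 2) ^ 2 :=
    sq_le_sq.2 (by rw [abs_sinh]; exact self_le_sinh_iff.2 (abs_nonneg _))
  nlinarith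

theorem cosh_le_one_add_sq {u : ℝ} (hu : u ^ 2 ≤ 1) : cosh u ≤ 1 + u ^ 2 := by
  have h := exp_bound_div_one_sub_of_interval (x := u ^ 2 / 2) (by positivity) (by linarith)
  have : 1 / (1 - u ^ 2 / 2) ≤ 1 + u ^ 2 := by
    rw [div_le_iff₀ (by linarith)]; nlinarith [sq_nonneg u]
  linarith [cosh_le_exp_half_sq u]

theorem exp_neg_mul_cosh_le {s : ℝ} (hs : 0 ≤ s) (u : ℝ) :
    exp (-(s * cosh u)) ≤ exp (-s) * exp (-(s / 2) * u ^ 2) := by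
  rw [← exp_add]
  exact exp_le_exp.2 (by nlinarith [one_add_sq_div_two_le_cosh u])

theorem integrable_exp_neg_mul_cosh {s : ℝ} (hs : 0 < s) :
    Integrable fun u => exp (-(s * cosh u)) :=
  ((integrable_exp_neg_mul_sq (half_pos hs)).const_mul _).mono' (by fun_prop)
    (ae_of_all _ fun u => by
      rw [norm_of_nonneg (exp_pos _).le]; exact exp_neg_mul_cosh_le hs.le u)

theorem rpow_neg_half_eq_inv_sqrt {s : ℝ} (hs : 0 ≤ s) : s ^ (-(1 / 2 : ℝ)) = (√s)⁻¹ := by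
  rw [rpow_neg hs, sqrt_eq_rpow]

theorem integral_exp_neg_mul_cosh_le {s : ℝ} (hs : 0 < s) :
    ∫ u, exp (-(s * cosh u)) ≤ √(2 * π) * (exp (-s) * s ^ (-(1 / 2 : ℝ))) :=
  calc ∫ u, exp (-(s * cosh u))
      ≤ ∫ u, exp (-s) * exp (-(s / 2) * u ^ 2) :=
        integral_mono (integrable_exp_neg_mul_cosh hs)
          ((integrable_exp_neg_mul_sq (half_pos hs)).const_mul _) (exp_neg_mul_cosh_le hs.le)
    _ = exp (-s) * √(π / (s / 2)) := by rw [integral_const_mul, integral_gaussian]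
    _ = √(2 * π) * (exp (-s) * s ^ (-(1 / 2 : ℝ))) := by
        rw [rpow_neg_half_eq_inv_sqrt hs.le, div_div_eq_mul_div, mul_comm π, sqrt_div' _ hs.le]
        ring

theorem le_integral_exp_neg_mul_cosh {s : ℝ} (hs : 1 ≤ s) :
    2 * exp (-1) * (exp (-s) * s ^ (-(1 / 2 : ℝ))) ≤ ∫ u, exp (-(s * cosh u)) := by
  have hs0 : 0 < s := one_pos.trans_le hs
  set δ := (√s)⁻¹ with hδ
  have hδ0 : 0 < δ := by positivity
  have hδsq : δ ^ 2 = s⁻¹ := by rw [hδ, inv_pow, sq_sqrt hs0.le]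
  have hnear : ∀ u ∈ Icc (-δ) δ, exp (-1) * exp (-s) ≤ exp (-(s * cosh u)) := by
    intro u hu
    have hu2 : u ^ 2 ≤ s⁻¹ := hδsq ▸ sq_le_sq' hu.1 hu.2
    have hsu : s * u ^ 2 ≤ 1 := by
      calc s * u ^ 2 ≤ s * s⁻¹ := by gcongr
        _ = 1 := mul_inv_cancel₀ hs0.ne'
    have hcosh := cosh_le_one_add_sq (hu2.trans (inv_le_one_of_one_le₀ hs))
    rw [← exp_add]
    exact exp_le_exp.2 (by nlinarith)
  calc 2 * exp (-1) * (exp (-s) * s ^ (-(1 / 2 : ℝ)))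
      = exp (-1) * exp (-s) * volume.real (Icc (-δ) δ) := by
        rw [Real.volume_real_Icc_of_le (by linarith), rpow_neg_half_eq_inv_sqrt hs0.le]; ring
    _ ≤ ∫ u in Icc (-δ) δ, exp (-(s * cosh u)) :=
        setIntegral_ge_of_const_le_real measurableSet_Icc measure_Icc_lt_top.ne hnear
          (integrable_exp_neg_mul_cosh hs0).integrableOn
    _ ≤ ∫ u, exp (-(s * cosh u)) :=
        setIntegral_le_integral (integrable_exp_neg_mul_cosh hs0)
          (ae_of_all _ fun _ => (exp_pos _).le)

theorem two_mul_exp_neg_one_le_sqrt_two_mul_pi : 2 * exp (-1) ≤ √(2 * π) := by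
  have h2 : 2 * exp (-1) ≤ 1 := by
    rw [exp_neg, ← div_eq_mul_inv, div_le_one (exp_pos 1)]
    linarith [add_one_le_exp (1 : ℝ)]
  have h3 : 1 ≤ √(2 * π) := one_le_sqrt.2 (by linarith [pi_gt_three])
  linarith

/-- There exist `C₂ ≥ C₁ > 0` such that for every `b > 0` and `x ∈ ℝ²` with `b|x| ≥ 1`,
`C₁ e^{−b|x|} (b|x|)^{−1/2} ≤ V_b(x) ≤ C₂ e^{−b|x|} (b|x|)^{−1/2}`. -/
theorem V2d_far_field_bounds :
    ∃ C₁ C₂ : ℝ, 0 < C₁ ∧ C₁ ≤ C₂ ∧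
      ∀ (b : ℝ), 0 < b → ∀ x : EuclideanSpace ℝ (Fin 2), 1 ≤ b * ‖x‖ →
        C₁ * (Real.exp (-(b * ‖x‖)) * (b * ‖x‖) ^ (-(1 / 2 : ℝ))) ≤ V2d b x ∧
        V2d b x ≤ C₂ * (Real.exp (-(b * ‖x‖)) * (b * ‖x‖) ^ (-(1 / 2 : ℝ))) := by
  refine ⟨2 * exp (-1), √(2 * π), by positivity, two_mul_exp_neg_one_le_sqrt_two_mul_pi,
    fun b hb x hx => ?_⟩
  have hx0 : 0 < ‖x‖ := pos_of_mul_pos_right (one_pos.trans_le hx) hb.le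
  rw [V2d, integral_Ioi_exp_neg_div_self_eq_integral_exp_neg_mul_cosh hb hx0]
  exact ⟨le_integral_exp_neg_mul_cosh hx, integral_exp_neg_mul_cosh_le (one_pos.trans_le hx)⟩
end
end

section
/- There exist constants C₂ ≥ C₁ > 0 such that for every b > 0 and every x ∈ ℝ² with 0 < b|x| ≤ 1/2, the two-dimensional potential satisfies C₁ · log(1/(b|x|)) ≤ V_b(x) ≤ C₂ · log(1/(b|x|)); that is, V_b(x) is comparable to −log(b|x|) in this region. -/
/-!
Substituting `r = t / b²` gives `V_b(x) = K(b|x|)` with `K(s) = ∫₀^∞ e^{-t - s²/(4t)} dt/t`.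
For `0 < s ≤ 1` the integrand is at least `e^{-2}/t` on `[s, 1]`, whence
`K(s) ≥ e^{-2} log(1/s)`. Conversely it is at most `4/s²` on `(0, s²]` (as `e^{-y} ≤ 1/y`),
at most `1/t` on `[s², 1]` and at most `e^{-t}` on `(1, ∞)`, so `K(s) ≤ 2 log(1/s) + 5`,
which is `≤ 10 log(1/s)` once `s ≤ 1/2`.
-/

open MeasureTheory Real

noncomputable section

open Set

def V2dKernel (s t : ℝ) : ℝ :=
  exp (-t - s ^ 2 / (4 * t)) / t

/-- `V2dProfile s = 2 K₀(s)`, with `K₀` the modified Bessel function of the second kind. -/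
def V2dProfile (s : ℝ) : ℝ :=
  ∫ t in Ioi (0 : ℝ), V2dKernel s t

theorem V2d_eq_V2dProfile {b : ℝ} (hb : 0 < b) (x : EuclideanSpace ℝ (Fin 2)) :
    V2d b x = V2dProfile (b * ‖x‖) := by
  have hscale := integral_comp_mul_left_Ioi' (V2dKernel (b * ‖x‖)) 0 (pow_pos hb 2)
  rw [mul_zero, smul_eq_mul, ← integral_const_mul] at hscale
  rw [V2dProfile, ← hscale, V2d]
  congr 1 with r
  rw [V2dKernel]
  rcases eq_or_ne r 0 with rfl | hr
  · simp
  · field_simp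

theorem exp_neg_div_div_le_inv {a t : ℝ} (ha : 0 < a) (ht : 0 < t) :
    exp (-(a / t)) / t ≤ a⁻¹ :=
  calc exp (-(a / t)) / t ≤ (a / t)⁻¹ / t := by
        gcongr
        rw [exp_neg]
        exact inv_anti₀ (by positivity) (by linarith [add_one_le_exp (a / t)])
    _ = a⁻¹ := by field_simp

theorem V2dKernel_nonneg (s : ℝ) {t : ℝ} (ht : 0 ≤ t) : 0 ≤ V2dKernel s t := by
  unfold V2dKernel
  positivity

theorem integrableOn_V2dKernel {s : ℝ} (hs : s ≠ 0) : IntegrableOn (V2dKernel s) (Ioi 0) := by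
  refine ((integrableOn_exp_neg_Ioi 0).const_mul (s ^ 2 / 4)⁻¹).mono'
    (Measurable.aestronglyMeasurable (by unfold V2dKernel; fun_prop)) ?_
  filter_upwards [ae_restrict_mem measurableSet_Ioi] with t (ht : 0 < t)
  have hdiv : s ^ 2 / (4 * t) = s ^ 2 / 4 / t := by ring
  rw [norm_of_nonneg (V2dKernel_nonneg s ht.le), V2dKernel, sub_eq_add_neg, exp_add,
    mul_div_assoc, hdiv, mul_comm]
  exact mul_le_mul_of_nonneg_right (exp_neg_div_div_le_inv (by positivity) ht) (exp_pos _).le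

theorem intervalIntegrable_V2dKernel {s a b : ℝ} (hs : s ≠ 0) (ha : 0 ≤ a) (hab : a ≤ b) :
    IntervalIntegrable (V2dKernel s) volume a b :=
  (intervalIntegrable_iff_integrableOn_Ioc_of_le hab).2 <|
    (integrableOn_V2dKernel hs).mono_set fun _ ht => ha.trans_lt ht.1

theorem exp_neg_two_mul_log_le_V2dProfile {s : ℝ} (hs : 0 < s) (hs1 : s ≤ 1) :
    exp (-2) * log (1 / s) ≤ V2dProfile s :=
  calc exp (-2) * log (1 / s) = ∫ t in s..1, exp (-2) * t⁻¹ := by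
        rw [intervalIntegral.integral_const_mul, integral_inv_of_pos hs one_pos]
    _ ≤ ∫ t in s..1, V2dKernel s t := by
        refine intervalIntegral.integral_mono_on_of_le_Ioo hs1
          ((intervalIntegral.intervalIntegrable_inv
            (fun t ht => ((lt_min hs one_pos).trans_le ht.1).ne') continuousOn_id).const_mul _)
          (intervalIntegrable_V2dKernel hs.ne' hs.le hs1) fun t ⟨hst, ht1⟩ => ?_
        have ht : 0 < t := hs.trans hst
        have hratio : s ^ 2 / (4 * t) ≤ 1 := by
          rw [div_le_one (by positivity)]; nlinarith
        rw [V2dKernel, ← div_eq_mul_inv]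
        gcongr
        linarith
    _ = ∫ t in Ioc s 1, V2dKernel s t := intervalIntegral.integral_of_le hs1
    _ ≤ V2dProfile s := by
        refine setIntegral_mono_set (integrableOn_V2dKernel hs.ne') ?_
          (Filter.Eventually.of_forall fun t ht => hs.trans ht.1)
        filter_upwards [ae_restrict_mem measurableSet_Ioi] with t (ht : 0 < t)
        exact V2dKernel_nonneg s ht.le

theorem intervalIntegral_V2dKernel_zero_sq_le {s : ℝ} (hs : s ≠ 0) :
    ∫ t in 0..s ^ 2, V2dKernel s t ≤ 4 := by
  have hs2 : 0 < s ^ 2 := by positivity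
  calc ∫ t in 0..s ^ 2, V2dKernel s t ≤ ∫ t in 0..s ^ 2, (s ^ 2 / 4)⁻¹ := by
        refine intervalIntegral.integral_mono_on_of_le_Ioo hs2.le
          (intervalIntegrable_V2dKernel hs le_rfl hs2.le) intervalIntegrable_const
          fun t ⟨ht, _⟩ => le_trans ?_ (exp_neg_div_div_le_inv (by positivity) ht)
        rw [V2dKernel, div_div]
        gcongr
        linarith
    _ = 4 := by rw [intervalIntegral.integral_const, smul_eq_mul]; field_simp; ring

theorem intervalIntegral_V2dKernel_sq_one_le {s : ℝ} (hs : 0 < s) (hs1 : s ≤ 1) :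
    ∫ t in s ^ 2..1, V2dKernel s t ≤ 2 * log (1 / s) := by
  have hs2 : 0 < s ^ 2 := by positivity
  have hs21 : s ^ 2 ≤ 1 := by nlinarith
  calc ∫ t in s ^ 2..1, V2dKernel s t ≤ ∫ t in s ^ 2..1, t⁻¹ := by
        refine intervalIntegral.integral_mono_on_of_le_Ioo hs21
          (intervalIntegrable_V2dKernel hs.ne' hs2.le hs21)
          (intervalIntegral.intervalIntegrable_inv
            (fun t ht => ((lt_min hs2 one_pos).trans_le ht.1).ne') continuousOn_id)
          fun t ⟨ht, _⟩ => ?_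
        have ht0 : 0 < t := hs2.trans ht
        have : 0 ≤ s ^ 2 / (4 * t) := by positivity
        rw [V2dKernel, ← one_div]
        exact div_le_div_of_nonneg_right (exp_le_one_iff.2 (by linarith)) ht0.le
    _ = 2 * log (1 / s) := by
        rw [integral_inv_of_pos hs2 one_pos, one_div, one_div, ← inv_pow, log_pow]
        norm_num

theorem setIntegral_Ioi_one_V2dKernel_le {s : ℝ} (hs : s ≠ 0) :
    ∫ t in Ioi 1, V2dKernel s t ≤ 1 :=
  calc ∫ t in Ioi 1, V2dKernel s t ≤ ∫ t in Ioi 1, exp (-t) := by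
        refine setIntegral_mono_on
          ((integrableOn_V2dKernel hs).mono_set (Ioi_subset_Ioi zero_le_one))
          (integrableOn_exp_neg_Ioi 1) measurableSet_Ioi fun t (ht : 1 < t) => ?_
        have : 0 ≤ s ^ 2 / (4 * t) := by positivity
        rw [V2dKernel, div_le_iff₀ (by linarith)]
        calc exp (-t - s ^ 2 / (4 * t)) ≤ exp (-t) := by gcongr; linarith
          _ ≤ exp (-t) * t := le_mul_of_one_le_right (exp_pos _).le ht.le
    _ ≤ 1 := by rw [integral_exp_neg_Ioi, exp_le_one_iff]; norm_num

theorem V2dProfile_le {s : ℝ} (hs : 0 < s) (hs1 : s ≤ 1) :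
    V2dProfile s ≤ 2 * log (1 / s) + 5 := by
  have hint := integrableOn_V2dKernel hs.ne'
  have hs2 : 0 < s ^ 2 := by positivity
  rw [V2dProfile, ← intervalIntegral.integral_interval_add_Ioi hint
      (hint.mono_set (Ioi_subset_Ioi zero_le_one)),
    ← intervalIntegral.integral_add_adjacent_intervals
      (intervalIntegrable_V2dKernel hs.ne' le_rfl hs2.le)
      (intervalIntegrable_V2dKernel hs.ne' hs2.le (by nlinarith))]
  linarith [intervalIntegral_V2dKernel_zero_sq_le hs.ne',
    intervalIntegral_V2dKernel_sq_one_le hs hs1, setIntegral_Ioi_one_V2dKernel_le (s := s) hs.ne']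

/-- There exist `C₂ ≥ C₁ > 0` such that for every `b > 0` and `x ∈ ℝ²` with
`0 < b|x| ≤ 1/2`, `C₁ log(1/(b|x|)) ≤ V_b(x) ≤ C₂ log(1/(b|x|))`. -/
theorem V2d_near_field_bounds :
    ∃ C₁ C₂ : ℝ, 0 < C₁ ∧ C₁ ≤ C₂ ∧
      ∀ (b : ℝ), 0 < b → ∀ x : EuclideanSpace ℝ (Fin 2),
        0 < b * ‖x‖ → b * ‖x‖ ≤ 1 / 2 →
          C₁ * Real.log (1 / (b * ‖x‖)) ≤ V2d b x ∧
          V2d b x ≤ C₂ * Real.log (1 / (b * ‖x‖)) := by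
  refine ⟨exp (-2), 10, exp_pos _,
    by linarith [exp_le_one_iff.2 (by norm_num : (-2 : ℝ) ≤ 0)], fun b hb x hpos hhalf => ?_⟩
  rw [V2d_eq_V2dProfile hb]
  have hlog : log 2 ≤ log (1 / (b * ‖x‖)) :=
    log_le_log two_pos (by rw [le_div_iff₀ hpos]; linarith)
  exact ⟨exp_neg_two_mul_log_le_V2dProfile hpos (by linarith),
    (V2dProfile_le hpos (by linarith)).trans (by linarith [log_two_gt_d9])⟩
end
end
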